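/- (Remark 2.6) Assume γᵢ > 0 for all i, and let θ := ((1−β_min)∨(1/2))/β_max. Then for every η > 0 there exist positive constants κ̆₀ and κ̆₁, depending only on η and the parameters, such that the function V̆(x) := exp(ηθΨ(−x) + ηΨ(x)) satisfies L_u V̆(x) ≤ κ̆₀ − κ̆₁·‖x‖₁·V̆(x) for all (x,u) ∈ K₀⁺ × Δ. -/

import Mathlib

/-!
Write `V̆ = exp F` with `F(y) = Σᵢ (η ψ(yᵢ) + A ψ(-yᵢ)) / μᵢ`, `A = ηθ`. As `F` is separable,
`L_u V̆ = V̆ · (Σᵢ λ̃ᵢ ((∂ᵢF)² + ∂ᵢ²F) + ⟨b, ∇F⟩)`. Since `0 ≤ ψ' ≤ 1` and `ψ'' ≤ 3/2`, the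
diffusion part is bounded. In the drift part, `t ψ'(t) ≥ t⁺ - 1` turns the mean reversion into
`-η xᵢ⁺ - A xᵢ⁻` up to constants, while the control term `(1 - βᵢ) ⟨e,x⟩⁺ uᵢ` costs at most
`η M ⟨e,x⟩⁺ ≤ η M ‖x⁺‖₁` with `M = (1 - β_min) ∨ 1/2 < 1`; dividing by `β_max` in `θ` is what
makes this hold also when `βᵢ > 1`. So the bracket is `≤ C - κ ‖x‖₁`, and because `F` grows at
most linearly, halving `κ` absorbs `C · V̆` into a constant.
-/

open scoped BigOperators

/-- The piecewise function ψ. -/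
noncomputable def psiFn (t : ℝ) : ℝ :=
  if t ≤ -1 then -(1/2)
  else if t ≤ 0 then (t+1)^3 - (1/2)*(t+1)^4 - 1/2
  else t

/-- ψ_ε(t) := ψ(εt). -/
noncomputable def psiE (ε t : ℝ) : ℝ := psiFn (ε * t)

/-- Ψ(x) := Σᵢ ψ(xᵢ)/μᵢ. -/
noncomputable def bigPsi {m : ℕ} (μ : Fin m → ℝ) (x : Fin m → ℝ) : ℝ :=
  ∑ i, psiFn (x i) / μ i

/-- Ψ_ε(x) := Σᵢ ψ_ε(xᵢ)/μᵢ. -/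
noncomputable def bigPsiE {m : ℕ} (μ : Fin m → ℝ) (ε : ℝ) (x : Fin m → ℝ) : ℝ :=
  ∑ i, psiE ε (x i) / μ i

/-- The drift b(x,u) with bᵢ(x,u) = −ρμᵢ/m − μᵢ(xᵢ − ⟨e,x⟩⁺uᵢ) − γᵢ⟨e,x⟩⁺uᵢ. -/
noncomputable def drift {m : ℕ} (ρ : ℝ) (μ γ : Fin m → ℝ) (x u : Fin m → ℝ) :
    Fin m → ℝ :=
  fun i => -(ρ * μ i / m) - μ i * (x i - max (∑ j, x j) 0 * u i)
    - γ i * max (∑ j, x j) 0 * u i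

/-- The extended generator L_u f(x) = Σᵢ λ̃ᵢ ∂²f/∂xᵢ²(x) + ⟨b(x,u), ∇f(x)⟩. -/
noncomputable def genL {m : ℕ} (lam : Fin m → ℝ) (ρ : ℝ) (μ γ : Fin m → ℝ)
    (u : Fin m → ℝ) (f : (Fin m → ℝ) → ℝ) (x : Fin m → ℝ) : ℝ :=
  ∑ i, lam i * fderiv ℝ (fun y => fderiv ℝ f y (Pi.single i 1)) x (Pi.single i 1)
    + fderiv ℝ f x (drift ρ μ γ x u)

/-- ‖x‖₁ = Σᵢ|xᵢ|. -/
noncomputable def norm1 {m : ℕ} (x : Fin m → ℝ) : ℝ := ∑ i, |x i|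

/-- ‖x⁻‖₁ = Σᵢ max(−xᵢ,0). -/
noncomputable def norm1neg {m : ℕ} (x : Fin m → ℝ) : ℝ := ∑ i, max (-(x i)) 0

open Set

theorem hasDerivAt_ite_le {f g f' g' : ℝ → ℝ} {a : ℝ}
    (hf : ∀ t, HasDerivAt f (f' t) t) (hg : ∀ t, HasDerivAt g (g' t) t)
    (hval : f a = g a) (hder : f' a = g' a) (t : ℝ) :
    HasDerivAt (fun s => if s ≤ a then f s else g s) (if t ≤ a then f' t else g' t) t := by
  rcases lt_trichotomy t a with h | rfl | h
  · rw [if_pos h.le]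
    refine (hf t).congr_of_eventuallyEq ?_
    filter_upwards [Iio_mem_nhds h] with s hs
    rw [if_pos (le_of_lt hs)]
  · rw [if_pos le_rfl]
    have hl : HasDerivWithinAt (fun s => if s ≤ t then f s else g s) (f' t) (Iic t) t :=
      (hf t).hasDerivWithinAt.congr (fun s hs => if_pos hs) (if_pos le_rfl)
    have hr : HasDerivWithinAt (fun s => if s ≤ t then f s else g s) (f' t) (Ici t) t := by
      refine hder ▸ (hg t).hasDerivWithinAt.congr (fun s hs => ?_) (by simp [hval])
      split_ifs with hst
      · rw [le_antisymm hst hs, hval]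
      · rfl
    simpa [Iic_union_Ici] using hl.union hr
  · rw [if_neg (not_le.mpr h)]
    refine (hg t).congr_of_eventuallyEq ?_
    filter_upwards [Ioi_mem_nhds h] with s hs
    rw [if_neg (not_le.mpr hs)]

noncomputable def psiDeriv (t : ℝ) : ℝ :=
  if t ≤ -1 then 0 else if t ≤ 0 then 3 * (t + 1) ^ 2 - 2 * (t + 1) ^ 3 else 1

noncomputable def psiDeriv2 (t : ℝ) : ℝ :=
  if t ≤ -1 then 0 else if t ≤ 0 then 6 * (t + 1) - 6 * (t + 1) ^ 2 else 0

theorem hasDerivAt_psiFn (t : ℝ) : HasDerivAt psiFn (psiDeriv t) t := by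
  have hpoly (s : ℝ) : HasDerivAt (fun s : ℝ => (s + 1) ^ 3 - (1 / 2) * (s + 1) ^ 4 - 1 / 2)
      (3 * (s + 1) ^ 2 - 2 * (s + 1) ^ 3) s := by
    have h : HasDerivAt (fun s : ℝ => s + 1) 1 s := (hasDerivAt_id s).add_const 1
    refine (((h.pow 3).sub ((h.pow 4).const_mul (1 / 2))).sub_const (1 / 2)).congr_deriv ?_
    norm_num; ring
  have hright (s : ℝ) :=
    hasDerivAt_ite_le (a := 0) hpoly hasDerivAt_id (by norm_num) (by norm_num) s
  exact hasDerivAt_ite_le (fun s => hasDerivAt_const s (-(1 / 2) : ℝ)) hright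
    (by norm_num) (by norm_num) t

theorem hasDerivAt_psiDeriv (t : ℝ) : HasDerivAt psiDeriv (psiDeriv2 t) t := by
  have hpoly (s : ℝ) : HasDerivAt (fun s : ℝ => 3 * (s + 1) ^ 2 - 2 * (s + 1) ^ 3)
      (6 * (s + 1) - 6 * (s + 1) ^ 2) s := by
    have h : HasDerivAt (fun s : ℝ => s + 1) 1 s := (hasDerivAt_id s).add_const 1
    refine (((h.pow 2).const_mul 3).sub ((h.pow 3).const_mul 2)).congr_deriv ?_
    norm_num; ring
  have hright (s : ℝ) := hasDerivAt_ite_le (a := 0) hpoly (fun s => hasDerivAt_const s (1 : ℝ))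
    (by norm_num) (by norm_num) s
  exact hasDerivAt_ite_le (fun s => hasDerivAt_const s (0 : ℝ)) hright
    (by norm_num) (by norm_num) t

section SeparableExp

variable {ι : Type*} [Fintype ι] {f f' f'' : ι → ℝ → ℝ}

theorem hasFDerivAt_sum_comp_apply (hf : ∀ i s, HasDerivAt (f i) (f' i s) s) (x : ι → ℝ) :
    HasFDerivAt (fun y : ι → ℝ => ∑ i, f i (y i))
      (∑ i, f' i (x i) • ContinuousLinearMap.proj (R := ℝ) (φ := fun _ : ι => ℝ) i) x :=
  HasFDerivAt.fun_sum fun i _ => (hf i (x i)).comp_hasFDerivAt x (hasFDerivAt_apply i x)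

theorem hasFDerivAt_exp_sum_comp_apply (hf : ∀ i s, HasDerivAt (f i) (f' i s) s)
    (x : ι → ℝ) :
    HasFDerivAt (fun y : ι → ℝ => Real.exp (∑ i, f i (y i)))
      (Real.exp (∑ i, f i (x i)) •
        ∑ i, f' i (x i) • ContinuousLinearMap.proj (R := ℝ) (φ := fun _ : ι => ℝ) i) x :=
  (Real.hasDerivAt_exp _).comp_hasFDerivAt x (hasFDerivAt_sum_comp_apply hf x)

theorem fderiv_exp_sum_comp_apply (hf : ∀ i s, HasDerivAt (f i) (f' i s) s) (x v : ι → ℝ) :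
    fderiv ℝ (fun y : ι → ℝ => Real.exp (∑ i, f i (y i))) x v
      = Real.exp (∑ i, f i (x i)) * ∑ i, f' i (x i) * v i := by
  simp [(hasFDerivAt_exp_sum_comp_apply hf x).fderiv]

variable [DecidableEq ι]

theorem fderiv_fderiv_exp_sum_comp_apply_single (hf : ∀ i s, HasDerivAt (f i) (f' i s) s)
    (hf' : ∀ i s, HasDerivAt (f' i) (f'' i s) s) (x : ι → ℝ) (i : ι) :
    fderiv ℝ (fun y => fderiv ℝ (fun z : ι → ℝ => Real.exp (∑ j, f j (z j))) y
        (Pi.single i 1)) x (Pi.single i 1)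
      = Real.exp (∑ j, f j (x j)) * (f' i (x i) ^ 2 + f'' i (x i)) := by
  have hfirst : (fun y => fderiv ℝ (fun z : ι → ℝ => Real.exp (∑ j, f j (z j))) y
      (Pi.single i 1)) = fun y => Real.exp (∑ j, f j (y j)) * f' i (y i) := by
    funext y
    simp [fderiv_exp_sum_comp_apply hf, Pi.single_apply]
  have hprod : HasFDerivAt (fun y => Real.exp (∑ j, f j (y j)) * f' i (y i)) _ x :=
    (hasFDerivAt_exp_sum_comp_apply hf x).mul
      ((hf' i (x i)).comp_hasFDerivAt x (hasFDerivAt_apply i x))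
  rw [hfirst, hprod.fderiv]
  simp [Pi.single_apply]
  ring

end SeparableExp

theorem genL_exp_sum_comp_apply {m : ℕ} (lam : Fin m → ℝ) (ρ : ℝ) (μ γ u : Fin m → ℝ)
    {f f' f'' : Fin m → ℝ → ℝ} (hf : ∀ i s, HasDerivAt (f i) (f' i s) s)
    (hf' : ∀ i s, HasDerivAt (f' i) (f'' i s) s) (x : Fin m → ℝ) :
    genL lam ρ μ γ u (fun y => Real.exp (∑ i, f i (y i))) x
      = Real.exp (∑ i, f i (x i)) * (∑ i, lam i * (f' i (x i) ^ 2 + f'' i (x i))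
          + ∑ i, f' i (x i) * drift ρ μ γ x u i) := by
  simp only [genL, fderiv_fderiv_exp_sum_comp_apply_single hf hf']
  simp only [fderiv_exp_sum_comp_apply hf, mul_add, Finset.mul_sum]
  congr 1
  exact Finset.sum_congr rfl fun i _ => by ring

theorem psiDeriv_nonneg (t : ℝ) : 0 ≤ psiDeriv t := by
  unfold psiDeriv
  split_ifs with h1 h2
  · exact le_rfl
  · nlinarith
  · exact zero_le_one

theorem psiDeriv_le_one (t : ℝ) : psiDeriv t ≤ 1 := by
  unfold psiDeriv
  split_ifs with h1 h2
  · exact zero_le_one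
  · nlinarith [sq_nonneg t]
  · exact le_rfl

theorem psiDeriv2_le (t : ℝ) : psiDeriv2 t ≤ 3 / 2 := by
  unfold psiDeriv2
  split_ifs with h1 h2
  · norm_num
  · nlinarith [sq_nonneg (t + 1 / 2)]
  · norm_num

theorem max_sub_one_le_mul_psiDeriv (t : ℝ) : max t 0 - 1 ≤ t * psiDeriv t := by
  have hle := psiDeriv_le_one t
  unfold psiDeriv at hle ⊢
  split_ifs at hle ⊢ with h1 h2
  · rw [max_eq_right (by linarith)]; norm_num
  · rw [max_eq_right h2]; nlinarith [mul_le_mul_of_nonpos_left hle h2]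
  · rw [max_eq_left (by linarith)]; linarith

theorem psiFn_le_abs (t : ℝ) : psiFn t ≤ |t| := by
  unfold psiFn
  split_ifs with h1 h2
  · linarith [abs_nonneg t]
  · nlinarith [abs_nonneg t, sq_nonneg t]
  · exact le_abs_self t

section PsiCombination

variable {η A : ℝ}

theorem psiDeriv_sub_mem_Icc (hη : 0 ≤ η) (hA : 0 ≤ A) (s : ℝ) :
    η * psiDeriv s - A * psiDeriv (-s) ∈ Icc (-A) η := by
  have h1 := mul_nonneg hη (psiDeriv_nonneg s)
  have h2 := mul_le_of_le_one_right hη (psiDeriv_le_one s)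
  have h3 := mul_nonneg hA (psiDeriv_nonneg (-s))
  have h4 := mul_le_of_le_one_right hA (psiDeriv_le_one (-s))
  constructor <;> linarith

theorem abs_psiDeriv_sub_le (hη : 0 ≤ η) (hA : 0 ≤ A) (s : ℝ) :
    |η * psiDeriv s - A * psiDeriv (-s)| ≤ η + A := by
  obtain ⟨h1, h2⟩ := psiDeriv_sub_mem_Icc hη hA s
  rw [abs_le]
  constructor <;> linarith

theorem one_sub_mul_psiDeriv_sub_le {M β : ℝ} (hη : 0 ≤ η) (hA : 0 ≤ A) (hM : 0 ≤ M)
    (hβ : 1 - β ≤ M) (hβA : (β - 1) * A ≤ η * M) (s : ℝ) :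
    (1 - β) * (η * psiDeriv s - A * psiDeriv (-s)) ≤ η * M := by
  obtain ⟨hwA, hwη⟩ := psiDeriv_sub_mem_Icc hη hA s
  set w := η * psiDeriv s - A * psiDeriv (-s)
  rcases le_total 0 w with hw | hw
  · nlinarith [mul_le_mul_of_nonneg_right hβ hw, mul_le_mul_of_nonneg_left hwη hM]
  rcases le_total 1 β with hβ1 | hβ1
  · nlinarith [mul_le_mul_of_nonneg_left (neg_le.mp hwA) (sub_nonneg.mpr hβ1)]
  · nlinarith [mul_nonpos_of_nonneg_of_nonpos (sub_nonneg.mpr hβ1) hw, mul_nonneg hη hM]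

theorem psiDeriv_sub_mul_le {M β r v s : ℝ} (hη : 0 ≤ η) (hA : 0 ≤ A) (hM : 0 ≤ M)
    (hβ : 1 - β ≤ M) (hβA : (β - 1) * A ≤ η * M) (hv : 0 ≤ v) :
    (η * psiDeriv s - A * psiDeriv (-s)) * (-r - s + (1 - β) * v)
      ≤ (η + A) * (|r| + 1) - η * max s 0 - A * max (-s) 0 + η * M * v := by
  set w := η * psiDeriv s - A * psiDeriv (-s) with hw
  have hconst : w * -r ≤ (η + A) * |r| := by
    calc w * -r ≤ |w * -r| := le_abs_self _
      _ = |w| * |r| := by rw [abs_mul, abs_neg]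
      _ ≤ (η + A) * |r| := mul_le_mul_of_nonneg_right (abs_psiDeriv_sub_le hη hA s) (abs_nonneg r)
  have hrevert : w * -s ≤ η + A - η * max s 0 - A * max (-s) 0 := by
    have h1 := mul_le_mul_of_nonneg_left (max_sub_one_le_mul_psiDeriv s) hη
    have h2 := mul_le_mul_of_nonneg_left (max_sub_one_le_mul_psiDeriv (-s)) hA
    rw [hw]; linarith
  have hcontrol := mul_le_mul_of_nonneg_right
    (one_sub_mul_psiDeriv_sub_le hη hA hM hβ hβA s) hv
  linarith

theorem psiDeriv_sub_sq_add_le {μ : ℝ} (hη : 0 ≤ η) (hA : 0 ≤ A) (hμ : 0 < μ) (s : ℝ) :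
    ((η * psiDeriv s - A * psiDeriv (-s)) / μ) ^ 2
        + (η * psiDeriv2 s + A * psiDeriv2 (-s)) / μ
      ≤ ((η + A) / μ) ^ 2 + 3 / 2 * ((η + A) / μ) := by
  have hfirst : |(η * psiDeriv s - A * psiDeriv (-s)) / μ| ≤ (η + A) / μ := by
    rw [abs_div, abs_of_pos hμ]
    exact div_le_div_of_nonneg_right (abs_psiDeriv_sub_le hη hA s) hμ.le
  have hsecond : (η * psiDeriv2 s + A * psiDeriv2 (-s)) / μ ≤ 3 / 2 * ((η + A) / μ) := by
    rw [← mul_div_assoc]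
    refine div_le_div_of_nonneg_right ?_ hμ.le
    nlinarith [psiDeriv2_le s, psiDeriv2_le (-s)]
  nlinarith [sq_le_sq' (abs_le.mp hfirst).1 (abs_le.mp hfirst).2]

theorem hasDerivAt_psiFn_comb (μ s : ℝ) :
    HasDerivAt (fun t => (η * psiFn t + A * psiFn (-t)) / μ)
      ((η * psiDeriv s - A * psiDeriv (-s)) / μ) s := by
  have hneg := (hasDerivAt_psiFn (-s)).comp s (hasDerivAt_neg s)
  refine ((((hasDerivAt_psiFn s).const_mul η).add (hneg.const_mul A)).div_const μ).congr_deriv ?_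
  ring

theorem hasDerivAt_psiDeriv_comb (μ s : ℝ) :
    HasDerivAt (fun t => (η * psiDeriv t - A * psiDeriv (-t)) / μ)
      ((η * psiDeriv2 s + A * psiDeriv2 (-s)) / μ) s := by
  have hneg := (hasDerivAt_psiDeriv (-s)).comp s (hasDerivAt_neg s)
  refine ((((hasDerivAt_psiDeriv s).const_mul η).sub (hneg.const_mul A)).div_const μ).congr_deriv ?_
  ring

end PsiCombination

open Finset in
theorem sum_psiFn_comb_le_mul_norm1 {m : ℕ} {η A : ℝ} {μ : Fin m → ℝ} (hη : 0 ≤ η) (hA : 0 ≤ A)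
    (hμ : ∀ i, 0 < μ i) (x : Fin m → ℝ) :
    ∑ i, (η * psiFn (x i) + A * psiFn (-x i)) / μ i ≤ (∑ i, (η + A) / μ i) * norm1 x := by
  rw [sum_mul]
  refine sum_le_sum fun i _ => ?_
  have habs : |x i| ≤ norm1 x :=
    single_le_sum (f := fun j => |x j|) (fun j _ => abs_nonneg _) (mem_univ i)
  have hψ := psiFn_le_abs (x i)
  have hψneg := psiFn_le_abs (-x i)
  rw [abs_neg] at hψneg
  rw [div_mul_eq_mul_div]
  refine div_le_div_of_nonneg_right ?_ (hμ i).le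
  nlinarith [mul_le_mul_of_nonneg_left (hψ.trans habs) hη,
    mul_le_mul_of_nonneg_left (hψneg.trans habs) hA]

theorem drift_eq {m : ℕ} (ρ : ℝ) {μ : Fin m → ℝ} (γ x u : Fin m → ℝ) {i : Fin m}
    (hμ : μ i ≠ 0) :
    drift ρ μ γ x u i
      = μ i * (-(ρ / m) - x i + (1 - γ i / μ i) * (max (∑ j, x j) 0 * u i)) := by
  simp only [drift]
  field_simp
  ring

open Finset in
theorem sum_psiDeriv_sub_mul_drift_le {m : ℕ} {ρ η A M : ℝ} {μ γ x u : Fin m → ℝ}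
    (hμ : ∀ i, 0 < μ i) (hη : 0 ≤ η) (hA : 0 ≤ A) (hM : 0 ≤ M)
    (hβ : ∀ i, 1 - γ i / μ i ≤ M) (hβA : ∀ i, (γ i / μ i - 1) * A ≤ η * M)
    (hu : u ∈ stdSimplex ℝ (Fin m)) :
    ∑ i, (η * psiDeriv (x i) - A * psiDeriv (-x i)) / μ i * drift ρ μ γ x u i
      ≤ m * ((η + A) * (|ρ / m| + 1)) - min (η * (1 - M)) A * norm1 x := by
  set S := max (∑ j, x j) 0
  set κ := min (η * (1 - M)) A
  have hS : S ≤ ∑ i, max (x i) 0 :=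
    max_le (sum_le_sum fun i _ => le_max_left _ _) (sum_nonneg fun _ _ => le_max_right _ _)
  have hcoord (i : Fin m) :
      (η * psiDeriv (x i) - A * psiDeriv (-x i)) / μ i * drift ρ μ γ x u i
        ≤ (η + A) * (|ρ / m| + 1) - κ * |x i| + η * M * (S * u i - max (x i) 0) := by
    have hκ : κ * |x i| ≤ η * (1 - M) * max (x i) 0 + A * max (-x i) 0 := by
      rw [← max_zero_add_max_neg_zero_eq_abs_self, mul_add]
      exact add_le_add (mul_le_mul_of_nonneg_right (min_le_left _ _) (le_max_right _ _))
        (mul_le_mul_of_nonneg_right (min_le_right _ _) (le_max_right _ _))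
    have hw := psiDeriv_sub_mul_le (r := ρ / m) (v := S * u i) (s := x i) hη hA hM (hβ i)
      (hβA i) (mul_nonneg (le_max_right _ _) (hu.1 i))
    rw [drift_eq ρ γ x u (hμ i).ne', div_mul_eq_mul_div, mul_div_assoc, mul_div_cancel_left₀ _
      (hμ i).ne']
    linarith
  calc _ ≤ ∑ i, ((η + A) * (|ρ / m| + 1) - κ * |x i| + η * M * (S * u i - max (x i) 0)) :=
        sum_le_sum fun i _ => hcoord i
    _ = m * ((η + A) * (|ρ / m| + 1)) - κ * norm1 x + η * M * (S - ∑ i, max (x i) 0) := by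
        simp only [sum_add_distrib, sum_sub_distrib, ← mul_sum, hu.2, norm1, sum_const,
          card_univ, Fintype.card_fin, nsmul_eq_mul, mul_one]
        ring
    _ ≤ m * ((η + A) * (|ρ / m| + 1)) - κ * norm1 x := by
        nlinarith [mul_nonneg hη hM]

/-- Split at `n = 2 C⁺ / κ`: beyond it `C - κ n / 2 ≤ 0`, below it `E ≤ exp (a · 2 C⁺ / κ)`. -/
theorem mul_le_sub_mul_of_le_exp {a C κ n E Q : ℝ} (ha : 0 ≤ a) (hκ : 0 < κ) (hn : 0 ≤ n)
    (hE : 0 ≤ E) (hEn : E ≤ Real.exp (a * n)) (hQ : Q ≤ C - κ * n) :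
    E * Q ≤ Real.exp (a * (2 * max C 0 / κ)) * max C 0 - κ / 2 * n * E := by
  have hC := le_max_left C 0
  have hC0 := le_max_right C 0
  have hsplit : E * Q ≤ E * (C - κ / 2 * n) - κ / 2 * n * E := by
    nlinarith [mul_le_mul_of_nonneg_left hQ hE]
  suffices E * (C - κ / 2 * n) ≤ Real.exp (a * (2 * max C 0 / κ)) * max C 0 by linarith
  rcases le_total (2 * max C 0 / κ) n with hlarge | hsmall
  · have hneg : C - κ / 2 * n ≤ 0 := by
      rw [div_le_iff₀ hκ] at hlarge
      linarith
    nlinarith [mul_nonpos_of_nonneg_of_nonpos hE hneg, Real.exp_pos (a * (2 * max C 0 / κ))]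
  · have hEbound : E ≤ Real.exp (a * (2 * max C 0 / κ)) :=
      hEn.trans (Real.exp_le_exp.mpr (mul_le_mul_of_nonneg_left hsmall ha))
    calc E * (C - κ / 2 * n) ≤ E * max C 0 :=
          mul_le_mul_of_nonneg_left (by nlinarith) hE
      _ ≤ Real.exp (a * (2 * max C 0 / κ)) * max C 0 := mul_le_mul_of_nonneg_right hEbound hC0

theorem sub_one_mul_mul_div_le {β βmax M η : ℝ} (hβ : β ≤ βmax) (hβmax : 0 < βmax)
    (hM : 0 ≤ M) (hη : 0 ≤ η) : (β - 1) * (η * (M / βmax)) ≤ η * M :=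
  calc (β - 1) * (η * (M / βmax)) ≤ βmax * (η * (M / βmax)) :=
        mul_le_mul_of_nonneg_right (by linarith) (by positivity)
    _ = η * M := by field_simp

theorem mul_bigPsi_neg_add_mul_bigPsi {m : ℕ} (η A : ℝ) (μ y : Fin m → ℝ) :
    A * bigPsi μ (-y) + η * bigPsi μ y = ∑ i, (η * psiFn (y i) + A * psiFn (-y i)) / μ i := by
  simp only [bigPsi, Pi.neg_apply, Finset.mul_sum, ← Finset.sum_add_distrib]
  exact Finset.sum_congr rfl fun i _ => by ring

theorem sum_second_order_add_sum_drift_le {m : ℕ} {ρ η A M : ℝ} {μ γ lam x u : Fin m → ℝ}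
    (hμ : ∀ i, 0 < μ i) (hlam : ∀ i, 0 ≤ lam i) (hη : 0 ≤ η) (hA : 0 ≤ A) (hM : 0 ≤ M)
    (hβ : ∀ i, 1 - γ i / μ i ≤ M) (hβA : ∀ i, (γ i / μ i - 1) * A ≤ η * M)
    (hu : u ∈ stdSimplex ℝ (Fin m)) :
    ∑ i, lam i * (((η * psiDeriv (x i) - A * psiDeriv (-x i)) / μ i) ^ 2
        + (η * psiDeriv2 (x i) + A * psiDeriv2 (-x i)) / μ i)
      + ∑ i, (η * psiDeriv (x i) - A * psiDeriv (-x i)) / μ i * drift ρ μ γ x u i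
      ≤ ∑ i, lam i * (((η + A) / μ i) ^ 2 + 3 / 2 * ((η + A) / μ i))
        + m * ((η + A) * (|ρ / m| + 1)) - min (η * (1 - M)) A * norm1 x := by
  have hsecond := Finset.sum_le_sum fun i (_ : i ∈ Finset.univ) =>
    mul_le_mul_of_nonneg_left (psiDeriv_sub_sq_add_le hη hA (hμ i) (x i)) (hlam i)
  linarith [sum_psiDeriv_sub_mul_drift_le (ρ := ρ) (x := x) hμ hη hA hM hβ hβA hu]

theorem stmt10_general {m : ℕ} (ρ : ℝ) (μ γ lam : Fin m → ℝ)
    (hμ : ∀ i, 0 < μ i) (hγ : ∀ i, 0 < γ i) (hlam : ∀ i, 0 < lam i)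
    (βmax βmin : ℝ)
    (hβmax : IsGreatest (Set.range fun i => γ i / μ i) βmax)
    (hβmin : IsLeast (Set.range fun i => γ i / μ i) βmin) :
    ∀ η : ℝ, 0 < η →
      ∃ κ₀ > (0:ℝ), ∃ κ₁ > (0:ℝ), ∀ x u : Fin m → ℝ, 0 ≤ ∑ i, x i →
        u ∈ stdSimplex ℝ (Fin m) →
        genL lam ρ μ γ u
            (fun y => Real.exp (η * (max (1 - βmin) (1/2) / βmax) * bigPsi μ (-y)
              + η * bigPsi μ y)) x
          ≤ κ₀ - κ₁ * norm1 x
              * Real.exp (η * (max (1 - βmin) (1/2) / βmax) * bigPsi μ (-x)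
                  + η * bigPsi μ x) := by
  intro η hη
  obtain ⟨⟨i₀, hi₀⟩, hβmax_ge⟩ := hβmax
  obtain ⟨⟨i₁, hi₁⟩, hβmin_le⟩ := hβmin
  set M := max (1 - βmin) (1 / 2 : ℝ)
  set A := η * (M / βmax)
  have hβmax_pos : 0 < βmax := hi₀ ▸ div_pos (hγ i₀) (hμ i₀)
  have hβmin_pos : 0 < βmin := hi₁ ▸ div_pos (hγ i₁) (hμ i₁)
  have hM : 0 < M := one_half_pos.trans_le (le_max_right _ _)
  have hA : 0 < A := mul_pos hη (div_pos hM hβmax_pos)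
  have hM_lt : M < 1 := max_lt (by linarith) (by norm_num)
  set κ := min (η * (1 - M)) A
  have hκ : 0 < κ := lt_min (mul_pos hη (by linarith)) hA
  have hβ (i : Fin m) : 1 - γ i / μ i ≤ M :=
    (sub_le_sub_left (hβmin_le ⟨i, rfl⟩) 1).trans (le_max_left _ _)
  have hβA (i : Fin m) : (γ i / μ i - 1) * A ≤ η * M :=
    sub_one_mul_mul_div_le (hβmax_ge ⟨i, rfl⟩) hβmax_pos hM.le hη.le
  have ha : 0 ≤ ∑ i, (η + A) / μ i :=
    Finset.sum_nonneg fun i _ => (div_pos (by linarith) (hμ i)).le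
  set C := ∑ i, lam i * (((η + A) / μ i) ^ 2 + 3 / 2 * ((η + A) / μ i))
    + m * ((η + A) * (|ρ / m| + 1))
  refine ⟨Real.exp ((∑ i, (η + A) / μ i) * (2 * max C 0 / κ)) * max C 0 + 1, by positivity,
    κ / 2, half_pos hκ, fun x u _ hu => ?_⟩
  simp only [mul_bigPsi_neg_add_mul_bigPsi]
  calc _ = _ := genL_exp_sum_comp_apply lam ρ μ γ u
        (fun i => hasDerivAt_psiFn_comb (μ i)) (fun i => hasDerivAt_psiDeriv_comb (μ i)) x
    _ ≤ _ := mul_le_sub_mul_of_le_exp ha hκ (Finset.sum_nonneg fun i _ => abs_nonneg (x i))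
          (Real.exp_pos _).le
          (Real.exp_le_exp.mpr (sum_psiFn_comb_le_mul_norm1 hη.le hA.le hμ x))
          (sum_second_order_add_sum_drift_le hμ (fun i => (hlam i).le) hη.le hA.le hM.le
            hβ hβA hu)
    _ ≤ _ := sub_le_sub_right (le_add_of_nonneg_right zero_le_one) _

/-- Remark 2.6: for every η > 0 there exist κ̆₀, κ̆₁ > 0 such that
V̆(x) = exp(ηθΨ(−x)+ηΨ(x)), with θ = ((1−β_min)∨(1/2))/β_max, satisfies
L_u V̆(x) ≤ κ̆₀ − κ̆₁‖x‖₁V̆(x) on K₀⁺ × Δ. -/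
theorem stmt10 {m : ℕ} (hm : 1 ≤ m) (ρ : ℝ) (μ γ lam : Fin m → ℝ)
    (hμ : ∀ i, 0 < μ i) (hγ : ∀ i, 0 < γ i) (hlam : ∀ i, 0 < lam i)
    (hsum : ∑ i, lam i / μ i = 1)
    (βmax βmin : ℝ)
    (hβmax : IsGreatest (Set.range fun i => γ i / μ i) βmax)
    (hβmin : IsLeast (Set.range fun i => γ i / μ i) βmin) :
    ∀ η : ℝ, 0 < η →
      ∃ κ₀ > (0:ℝ), ∃ κ₁ > (0:ℝ), ∀ x u : Fin m → ℝ, 0 ≤ ∑ i, x i →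
        u ∈ stdSimplex ℝ (Fin m) →
        genL lam ρ μ γ u
            (fun y => Real.exp (η * (max (1 - βmin) (1/2) / βmax) * bigPsi μ (-y)
              + η * bigPsi μ y)) x
          ≤ κ₀ - κ₁ * norm1 x
              * Real.exp (η * (max (1 - βmin) (1/2) / βmax) * bigPsi μ (-x)
                  + η * bigPsi μ x) :=
  stmt10_general ρ μ γ lam hμ hγ hlam βmax βmin hβmax hβmin
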